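/- Let V be an 𝔽₂-vector space with a linear map d : V → V, d∘d = 0. On W = V ⊗_{𝔽₂} V take d_W = d⊗id + id⊗d and the swap involution ι(v₁⊗v₂) = v₂⊗v₁, and consider the group-cohomology complex of sequences ℕ → W with differential (Df)ₙ = d_W(fₙ) + fₙ₋₁ + ι(fₙ₋₁). Then for any v, w ∈ V with d(v) = 0, the element of ℕ → W whose coefficient at 0 is (v+dw)⊗(v+dw) + v⊗v and whose other coefficients vanish equals D applied to the element whose coefficient at 0 is v⊗w + w⊗v + w⊗(dw), whose coefficient at 1 is w⊗w, and whose other coefficients vanish. -/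
import Mathlib

open TensorProduct

/-- The differential of the group-cohomology complex `C(ℤ/2; W)`:
`(Df)ₙ = d_W(fₙ) + fₙ₋₁ + ι(fₙ₋₁)`, with `f₋₁ = 0`. -/
def grpD {W : Type*} [AddCommGroup W] [Module (ZMod 2) W]
    (dW ι : W →ₗ[ZMod 2] W) (f : ℕ → W) : ℕ → W
  | 0 => dW (f 0)
  | (n + 1) => dW (f (n + 1)) + f n + ι (f n)

lemma add_self_zmod2 {M : Type*} [AddCommGroup M] [Module (ZMod 2) M] (x : M) :
    x + x = 0 := by
  rw [← two_smul (ZMod 2), show (2:ZMod 2) = 0 from rfl, zero_smul]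

lemma two_nsmul_zmod2 {M : Type*} [AddCommGroup M] [Module (ZMod 2) M] (x : M) :
    (2 : ℕ) • x = 0 := by rw [two_smul]; exact add_self_zmod2 x

lemma two_zsmul_zmod2 {M : Type*} [AddCommGroup M] [Module (ZMod 2) M] (x : M) :
    (2 : ℤ) • x = 0 := by rw [two_smul]; exact add_self_zmod2 x

/-- Well-definedness of the squaring map `v ↦ v ⊗ v` on cohomology: replacing a
cocycle `v` by `v + dw` changes `v ⊗ v` by the explicit coboundary
`D(v⊗w + w⊗v + w⊗dw + h·(w⊗w))` in the group-cohomology complex of `V ⊗ V`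
(with differential `d⊗id + id⊗d` and the swap involution). -/
theorem stmt9 {V : Type*} [AddCommGroup V] [Module (ZMod 2) V]
    (d : V →ₗ[ZMod 2] V) (hdd : d ∘ₗ d = 0)
    (v w : V) (hv : d v = 0) :
    (fun n => if n = 0 then
        ((v + d w) ⊗ₜ[ZMod 2] (v + d w) + v ⊗ₜ[ZMod 2] v : V ⊗[ZMod 2] V)
      else 0)
      = grpD
          (TensorProduct.map d LinearMap.id + TensorProduct.map LinearMap.id d)
          (TensorProduct.comm (ZMod 2) V V).toLinearMap
          (fun n => match n with
            | 0 => v ⊗ₜ[ZMod 2] w + w ⊗ₜ[ZMod 2] v + w ⊗ₜ[ZMod 2] (d w)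
            | 1 => w ⊗ₜ[ZMod 2] w
            | _ => 0) := by
  have hddw : d (d w) = 0 := by
    have := congrFun (congrArg (fun f => f.toFun) hdd) w
    simpa using this
  funext n
  match n with
  | 0 =>
    simp only [grpD, map_add, TensorProduct.map_tmul, LinearMap.add_apply,
      LinearMap.id_coe, id_eq, hv, hddw, tmul_add, add_tmul, zero_tmul, tmul_zero]
    abel_nf
    simp only [two_nsmul_zmod2, two_zsmul_zmod2, add_zero, zero_add, if_true]
  | 1 =>
    simp only [grpD, map_add, TensorProduct.map_tmul, LinearMap.add_apply,
      LinearMap.id_coe, id_eq, LinearEquiv.coe_coe, TensorProduct.comm_tmul]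
    abel_nf
    simp only [two_nsmul_zmod2, two_zsmul_zmod2, add_zero, zero_add, if_neg (one_ne_zero)]
  | 2 =>
    simp [grpD, add_self_zmod2]
  | (n+3) =>
    simp [grpD]
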